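/- arXiv:1009.5999 — 2 statements merged into one kernel-verified Lean document; each statement's English description precedes it below -/
import Mathlib

section
/- Let V be a finite-dimensional real vector space with a nondegenerate symmetric bilinear form G of signature (n,n), let W ⊆ V be a subspace, and F an alternating bilinear form on W. Define allowed pairs (u,v) by u ∈ W, v ∈ V, G(v,w) = F(u,w) for all w ∈ W. Suppose G(u,u) = -G(v,v) for all allowed pairs. Then for every allowed pair (u,v), v ∈ W and (v,u) is also an allowed pair, i.e. G(u,w) = F(v,w) for all w ∈ W. -/
/-!
Polarizing the conformal condition gives `G(x, x') = -G(y, y')` for any two allowed pairs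
`(x, y)` and `(x', y')`. Pairing an allowed `(u, v)` with `(0, z)`, `z ∈ W^⊥`, shows
`v ∈ W^⊥⊥ = W`. Pairing it with `(w, y)`, which exists for every `w ∈ W` because `G` is
nondegenerate, gives `G(u, w) = -G(v, y) = -F(w, v) = F(v, w)`.
-/

open Module

namespace LinearMap.BilinForm

variable {K V : Type*} [Field K] [AddCommGroup V] [Module K V]
  {G : LinearMap.BilinForm K V} {W : Submodule K V} {F : LinearMap.BilinForm K W}

def IsAllowedPair (G : LinearMap.BilinForm K V) (F : LinearMap.BilinForm K W) (u : W) (v : V) :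
    Prop :=
  ∀ w : W, G v w = F u w

theorem IsAllowedPair.add {u u' : W} {v v' : V} (h : IsAllowedPair G F u v)
    (h' : IsAllowedPair G F u' v') : IsAllowedPair G F (u + u') (v + v') := fun w => by
  simp only [map_add, LinearMap.add_apply, h w, h' w]

theorem isAllowedPair_zero_iff (hG : G.IsRefl) {z : V} :
    IsAllowedPair G F 0 z ↔ z ∈ G.orthogonal W := by
  simp only [IsAllowedPair, map_zero, mem_orthogonal_iff, Subtype.forall]
  exact forall₂_congr fun w _ => ⟨fun h => hG z w h, fun h => hG w z h⟩

theorem exists_isAllowedPair [FiniteDimensional K V] (hG : G.Nondegenerate) (u : W) :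
    ∃ v, IsAllowedPair G F u v := by
  obtain ⟨ψ, hψ⟩ := Subspace.dualRestrict_surjective (W := W) (F u)
  refine ⟨(G.toDual hG).symm ψ, fun w => ?_⟩
  rw [apply_toDual_symm_apply, ← hψ, Submodule.dualRestrict_apply]

section Conformal

variable [NeZero (2 : K)] (hG : G.IsSymm)
  (hconf : ∀ x y, IsAllowedPair G F x y → G (x : V) x = -G y y)
include hG hconf

theorem IsAllowedPair.apply_eq_neg {x x' : W} {y y' : V} (h : IsAllowedPair G F x y)
    (h' : IsAllowedPair G F x' y') : G (x : V) x' = -G y y' := by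
  have hsum := hconf _ _ (h.add h')
  simp only [Submodule.coe_add, map_add, LinearMap.add_apply, hconf _ _ h, hconf _ _ h',
    hG.eq (x' : V) x, hG.eq y' y] at hsum
  refine mul_left_cancel₀ (two_ne_zero (α := K)) ?_
  linear_combination hsum

theorem IsAllowedPair.mem [FiniteDimensional K V] (hGnd : G.Nondegenerate) {u : W} {v : V}
    (h : IsAllowedPair G F u v) : v ∈ W := by
  rw [← G.orthogonal_orthogonal hGnd hG.isRefl W]
  intro z hz
  have hvz : G v z = 0 := by
    simpa using (h.apply_eq_neg hG hconf ((isAllowedPair_zero_iff hG.isRefl).2 hz)).symm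
  show G z v = 0
  rw [hG.eq, hvz]

theorem IsAllowedPair.swap [FiniteDimensional K V] (hGnd : G.Nondegenerate)
    (hF : F.IsAlt) {u : W} {v : V} (h : IsAllowedPair G F u v) (hv : v ∈ W) :
    IsAllowedPair G F ⟨v, hv⟩ u := fun w => by
  obtain ⟨y, hy⟩ := exists_isAllowedPair (F := F) hGnd w
  rw [h.apply_eq_neg hG hconf hy, hG.eq, hy ⟨v, hv⟩, ← LinearMap.IsAlt.neg hF, neg_neg]

end Conformal

end LinearMap.BilinForm

open LinearMap.BilinForm in
theorem stmt4_general {V : Type*} [AddCommGroup V] [Module ℝ V] [FiniteDimensional ℝ V]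
    (G : LinearMap.BilinForm ℝ V) (hGnd : G.Nondegenerate) (hGsymm : G.IsSymm)
    (W : Submodule ℝ V) (F : LinearMap.BilinForm ℝ W) (hFalt : F.IsAlt)
    (hconf : ∀ (x : W) (y : V), (∀ w : W, G y w = F x w) →
      G (x : V) (x : V) = -G y y) :
    ∀ (u : W) (v : V), (∀ w : W, G v w = F u w) →
      ∃ hv : v ∈ W, ∀ w : W, G (u : V) (w : V) = F ⟨v, hv⟩ w := fun _ _ huv =>
  let hv := IsAllowedPair.mem hGsymm hconf hGnd huv
  ⟨hv, IsAllowedPair.swap hGsymm hconf hGnd hFalt huv hv⟩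

/-- Proposition 1: For `G` of signature `(n,n)`, if
`G(u,u) = -G(v,v)` for all allowed pairs `(u,v)`, then for every allowed pair
`(u,v)` one has `v ∈ W` and `(v,u)` is also an allowed pair:
`G(u,w) = F(v,w)` for all `w ∈ W`. -/
theorem stmt4 {V : Type*} [AddCommGroup V] [Module ℝ V] [FiniteDimensional ℝ V]
    (n : ℕ) (hdim : finrank ℝ V = 2 * n)
    (G : LinearMap.BilinForm ℝ V) (hGnd : G.Nondegenerate) (hGsymm : G.IsSymm)
    (hsig : ∃ P N : Submodule ℝ V, IsCompl P N ∧
      finrank ℝ P = n ∧ finrank ℝ N = n ∧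
      (∀ x ∈ P, x ≠ 0 → 0 < G x x) ∧ (∀ x ∈ N, x ≠ 0 → G x x < 0))
    (W : Submodule ℝ V) (F : LinearMap.BilinForm ℝ W) (hFalt : F.IsAlt)
    (hconf : ∀ (x : W) (y : V), (∀ w : W, G y w = F x w) →
      G (x : V) (x : V) = -G y y) :
    ∀ (u : W) (v : V), (∀ w : W, G v w = F u w) →
      ∃ hv : v ∈ W, ∀ w : W, G (u : V) (w : V) = F ⟨v, hv⟩ w :=
  stmt4_general G hGnd hGsymm W F hFalt hconf
end

section
/- Let V be a 2n-dimensional real vector space with a nondegenerate symmetric bilinear form G of signature (n,n), W ⊆ V a coisotropic subspace of dimension k (so n ≤ k ≤ 2n), and F an alternating form on W with radical W⊥ such that, on a complement S of W⊥ in W, the endomorphism R = G̃⁻¹F̃ satisfies R² = id. Define R₊ = {u ∈ W : G(u,w) = F(u,w) for all w ∈ W}. Then dim R₊ = n. -/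
/-! Write `W = S ⊕ W⊥`. Since `W⊥` is `G`-orthogonal to `W` and lies in the radical of `F`, both
forms see only the `S`-component of vectors of `W`, so `s + z` (with `s ∈ S`, `z ∈ W⊥`) lies in
`R₊` iff `R s = s`, and `R₊ = W⊥ ⊕ S₊`. On `S` the form `G` is nondegenerate and, `F` being
alternating, `R` is `G`-skew-adjoint; hence both eigenspaces `S₊`, `S₋` of the involution `R` are
isotropic, so each has at most half the dimension of `S = S₊ ⊕ S₋`, i.e. exactly half.
Then `2 dim R₊ = 2 dim W⊥ + dim S = dim W⊥ + dim W = dim V = 2n`. -/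

open Module

/-- The `G`-orthogonal of a subspace `W`. -/
def orthSub {V : Type*} [AddCommGroup V] [Module ℝ V]
    (G : LinearMap.BilinForm ℝ V) (W : Submodule ℝ V) : Submodule ℝ V where
  carrier := {v | ∀ w ∈ W, G v w = 0}
  zero_mem' := by intro w hw; simp
  add_mem' := by intro a b ha hb w hw; simp [ha w hw, hb w hw]
  smul_mem' := by intro c a ha w hw; simp [ha w hw]

/-- The subbundle `R₊ = {u ∈ W : G(u,w) = F(u,w) for all w ∈ W}`. -/
def Rplus {V : Type*} [AddCommGroup V] [Module ℝ V]
    (G : LinearMap.BilinForm ℝ V) (W : Submodule ℝ V)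
    (F : LinearMap.BilinForm ℝ W) : Submodule ℝ W where
  carrier := {u | ∀ w : W, G (u : V) (w : V) = F u w}
  zero_mem' := by intro w; simp
  add_mem' := by intro a b ha hb w; simp [ha w, hb w]
  smul_mem' := by intro c a ha w; simp [ha w]

open LinearMap (BilinForm)

namespace Module.End

variable {K M : Type*} [Field K] [AddCommGroup M] [Module K M]

theorem eigenspace_one_sup_eigenspace_neg_one [NeZero (2 : K)] {f : End K M}
    (hf : Function.Involutive f) : f.eigenspace 1 ⊔ f.eigenspace (-1) = ⊤ := by
  refine eq_top_iff.mpr fun x _ => Submodule.mem_sup.mpr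
    ⟨(2⁻¹ : K) • (x + f x), ?_, (2⁻¹ : K) • (x - f x), ?_, ?_⟩
  · rw [mem_eigenspace_iff, map_smul, map_add, hf x, add_comm, one_smul]
  · rw [mem_eigenspace_iff, map_smul, map_sub, hf x, neg_one_smul, ← smul_neg, neg_sub]
  · rw [← smul_add, add_add_sub_cancel, ← two_smul K, smul_smul, inv_mul_cancel₀ two_ne_zero,
      one_smul]

end Module.End

namespace LinearMap.BilinForm

variable {K M : Type*} [Field K] [AddCommGroup M] [Module K M]

theorem two_mul_finrank_le_of_isotropic [FiniteDimensional K M] {B : BilinForm K M}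
    (hB : B.Nondegenerate) {U : Submodule K M} (hU : ∀ x ∈ U, ∀ y ∈ U, B x y = 0) :
    2 * finrank K U ≤ finrank K M := by
  have := Submodule.finrank_mono (show U ≤ B.orthogonal U from fun x hx y hy => hU y hy x hx)
  have := finrank_orthogonal hB U
  have := Submodule.finrank_le U
  omega

theorem apply_eq_zero_of_mem_eigenspace [NeZero (2 : K)] {B : BilinForm K M}
    {f : Module.End K M} (hf : B.IsSkewAdjoint f) {μ : K} (hμ : μ ≠ 0) {x y : M}
    (hx : x ∈ f.eigenspace μ) (hy : y ∈ f.eigenspace μ) : B x y = 0 := by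
  have h := hf x y
  rw [Module.End.mem_eigenspace_iff] at hx hy
  simp only [Pi.neg_apply, hx, hy, map_smul, LinearMap.smul_apply, smul_eq_mul,
    map_neg] at h
  have : (2 * μ) * B x y = 0 := by linear_combination h
  simpa [hμ, two_ne_zero] using this

theorem two_mul_finrank_eigenspace_one [FiniteDimensional K M] [NeZero (2 : K)]
    {B : BilinForm K M} (hB : B.Nondegenerate) {f : Module.End K M} (hf : B.IsSkewAdjoint f)
    (hinv : Function.Involutive f) : 2 * finrank K (f.eigenspace 1) = finrank K M := by
  have hp := two_mul_finrank_le_of_isotropic hB fun x hx y hy =>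
    apply_eq_zero_of_mem_eigenspace hf one_ne_zero hx hy
  have hm := two_mul_finrank_le_of_isotropic hB fun x hx y hy =>
    apply_eq_zero_of_mem_eigenspace hf (neg_ne_zero.mpr one_ne_zero) hx hy
  have hsum := Submodule.finrank_add_le_finrank_add_finrank (f.eigenspace 1) (f.eigenspace (-1))
  rw [Module.End.eigenspace_one_sup_eigenspace_neg_one hinv, finrank_top] at hsum
  omega

end LinearMap.BilinForm

section Bibrane

variable {V : Type*} [AddCommGroup V] [Module ℝ V] {G : BilinForm ℝ V}

theorem orthSub_eq_orthogonal (hG : G.IsRefl) (W : Submodule ℝ V) :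
    orthSub G W = G.orthogonal W := by
  ext v
  exact ⟨fun h w hw => hG v w (h w hw), fun h w hw => hG w v (h w hw)⟩

theorem finrank_add_finrank_orthSub [FiniteDimensional ℝ V] (hGnd : G.Nondegenerate)
    (hG : G.IsRefl) (W : Submodule ℝ V) :
    finrank ℝ W + finrank ℝ (orthSub G W) = finrank ℝ V := by
  rw [orthSub_eq_orthogonal hG, LinearMap.BilinForm.finrank_orthogonal hGnd]
  have := Submodule.finrank_le W
  omega

variable {W S : Submodule ℝ V}

theorem apply_eq_zero_of_mem_orthSub (hG : G.IsRefl) {v z : V} (hv : v ∈ W)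
    (hz : z ∈ orthSub G W) : G v z = 0 :=
  hG z v (hz v hv)

theorem nondegenerate_restrict_of_sup_orthSub_eq (hG : G.IsRefl) (hdisj : S ⊓ orthSub G W = ⊥)
    (hsup : S ⊔ orthSub G W = W) : (G.restrict S).Nondegenerate := by
  refine (LinearMap.IsRefl.nondegenerate_iff_separatingLeft
    (B := G.restrict S) fun x y => hG x y).mpr fun x hx => ?_
  have hxW : (x : V) ∈ orthSub G W := by
    intro w hw
    rw [← hsup] at hw
    obtain ⟨s, hs, z, hz, rfl⟩ := Submodule.mem_sup.mp hw
    rw [map_add, apply_eq_zero_of_mem_orthSub hG (hsup ▸ Submodule.mem_sup_left x.2) hz]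
    simpa using hx ⟨s, hs⟩
  simpa using (Submodule.eq_bot_iff _).mp hdisj x ⟨x.2, hxW⟩

theorem isSkewAdjoint_restrict (hG : G.IsSymm) (hSW : S ≤ W) {F : BilinForm ℝ W}
    (hF : F.IsAlt) {R : Module.End ℝ S}
    (hR : ∀ x y : S, F ⟨x, hSW x.2⟩ ⟨y, hSW y.2⟩ = G (R x : V) y) :
    (G.restrict S).IsSkewAdjoint R := by
  intro x y
  show G (R x : V) y = G x ((-R y : S) : V)
  rw [Submodule.coe_neg, map_neg, ← hR, ← hF.neg_eq, hR, hG.eq]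

theorem mem_Rplus_iff_of_coe_eq_add (hG : G.IsRefl) (hSW : S ≤ W)
    (hsup : S ⊔ orthSub G W = W) (hGS : (G.restrict S).Nondegenerate) {F : BilinForm ℝ W}
    (hF : F.IsRefl) (hFP : ∀ z : W, (z : V) ∈ orthSub G W → ∀ w, F z w = 0)
    {R : Module.End ℝ S} (hR : ∀ x y : S, F ⟨x, hSW x.2⟩ ⟨y, hSW y.2⟩ = G (R x : V) y)
    {u : W} {s : S} {z : V} (hz : z ∈ orthSub G W) (hu : (u : V) = s + z) :
    u ∈ Rplus G W F ↔ R s = s := by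
  have hmemW {z : V} (hz : z ∈ orthSub G W) : z ∈ W := hsup ▸ Submodule.mem_sup_right hz
  have hu' : u = ⟨s, hSW s.2⟩ + ⟨z, hmemW hz⟩ := Subtype.ext hu
  have hGu (w : W) : G u w = G s w := by
    rw [hu, map_add, LinearMap.add_apply, hz w w.2, add_zero]
  have hFu (w : W) : F u w = F ⟨s, hSW s.2⟩ w := by
    rw [hu', map_add, LinearMap.add_apply, hFP ⟨z, hmemW hz⟩ hz, add_zero]
  have hw (w : W) : ∃ t : S, G u w = G s t ∧ F u w = G (R s : V) t := by
    obtain ⟨t, ht, z', hz', hw⟩ := Submodule.mem_sup.mp (hsup.ge w.2)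
    have hw' : w = ⟨t, hSW ht⟩ + ⟨z', hmemW hz'⟩ := Subtype.ext hw.symm
    refine ⟨⟨t, ht⟩, ?_, ?_⟩
    · rw [hGu, ← hw, map_add, apply_eq_zero_of_mem_orthSub hG (hSW s.2) hz', add_zero]
    · rw [hFu, hw', map_add, hF _ _ (hFP ⟨z', hmemW hz'⟩ hz' _), add_zero, hR s ⟨t, ht⟩]
  have hRs_inj := (LinearMap.ker_eq_bot.mp hGS.ker_eq_bot).eq_iff (a := R s) (b := s)
  rw [← hRs_inj, LinearMap.ext_iff]
  constructor
  · intro hmem t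
    have := hmem ⟨t, hSW t.2⟩
    rw [hGu, hFu, hR] at this
    exact this.symm
  · intro h w
    obtain ⟨t, hG', hF'⟩ := hw w
    rw [hG', hF']
    exact (h t).symm

theorem map_subtype_Rplus_eq (hG : G.IsRefl) (hSW : S ≤ W) (hsup : S ⊔ orthSub G W = W)
    (hGS : (G.restrict S).Nondegenerate) {F : BilinForm ℝ W} (hF : F.IsRefl)
    (hFP : ∀ z : W, (z : V) ∈ orthSub G W → ∀ w, F z w = 0)
    {R : Module.End ℝ S} (hR : ∀ x y : S, F ⟨x, hSW x.2⟩ ⟨y, hSW y.2⟩ = G (R x : V) y) :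
    (Rplus G W F).map W.subtype = orthSub G W ⊔ (R.eigenspace 1).map S.subtype := by
  ext v
  constructor
  · rintro ⟨u, hu, rfl⟩
    obtain ⟨s, hs, z, hz, hsz⟩ := Submodule.mem_sup.mp (hsup.ge u.2)
    have hRs := (mem_Rplus_iff_of_coe_eq_add hG hSW hsup hGS hF hFP hR (s := ⟨s, hs⟩) hz
      hsz.symm).mp hu
    refine Submodule.mem_sup.mpr ⟨z, hz, s, ⟨⟨s, hs⟩, ?_, rfl⟩, add_comm z s ▸ hsz⟩
    exact Module.End.mem_eigenspace_iff.mpr (by rw [hRs, one_smul])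
  · intro hv
    obtain ⟨z, hz, _, ⟨s, hs, rfl⟩, rfl⟩ := Submodule.mem_sup.mp hv
    have hzW : z ∈ W := hsup ▸ Submodule.mem_sup_right hz
    refine ⟨⟨z + s, add_mem hzW (hSW s.2)⟩, ?_, rfl⟩
    refine (mem_Rplus_iff_of_coe_eq_add hG hSW hsup hGS hF hFP hR hz (add_comm _ _)).mpr ?_
    exact (Module.End.mem_eigenspace_iff.mp hs).trans (one_smul ℝ s)

end Bibrane

theorem stmt8_general {V : Type*} [AddCommGroup V] [Module ℝ V] [FiniteDimensional ℝ V]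
    (n : ℕ) (hdim : finrank ℝ V = 2 * n)
    (G : LinearMap.BilinForm ℝ V) (hGnd : G.Nondegenerate) (hGsymm : G.IsSymm)
    (W : Submodule ℝ V)
    (F : LinearMap.BilinForm ℝ W) (hFalt : F.IsAlt)
    (hker : ∀ u : W, (∀ w : W, F u w = 0) ↔ (u : V) ∈ orthSub G W)
    (S : Submodule ℝ V) (hSle : S ≤ W)
    (hdisj : S ⊓ orthSub G W = ⊥) (hsup : S ⊔ orthSub G W = W)
    (R : S →ₗ[ℝ] S)
    (hR : ∀ x y : S, F ⟨(x : V), hSle x.2⟩ ⟨(y : V), hSle y.2⟩ = G ((R x : S) : V) (y : V))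
    (hR2 : ∀ x : S, R (R x) = x) :
    finrank ℝ (Rplus G W F) = n := by
  have hGS := nondegenerate_restrict_of_sup_orthSub_eq hGsymm.isRefl hdisj hsup
  have hRplus := map_subtype_Rplus_eq hGsymm.isRefl hSle hsup hGS hFalt.isRefl
    (fun z hz => (hker z).mpr hz) hR
  have hdisj' : orthSub G W ⊓ (Module.End.eigenspace R 1).map S.subtype = ⊥ :=
    eq_bot_iff.mpr (hdisj ▸ fun x hx => ⟨Submodule.map_subtype_le _ _ hx.2, hx.1⟩)
  have hRplus_dim := Submodule.finrank_sup_add_finrank_inf_eq (orthSub G W)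
    ((Module.End.eigenspace R 1).map S.subtype)
  have hW_dim := Submodule.finrank_sup_add_finrank_inf_eq S (orthSub G W)
  have hV_dim := finrank_add_finrank_orthSub hGnd hGsymm.isRefl W
  have hS_dim := LinearMap.BilinForm.two_mul_finrank_eigenspace_one hGS
    (isSkewAdjoint_restrict hGsymm hSle hFalt hR) hR2
  rw [← hRplus, hdisj', Submodule.finrank_map_subtype_eq, Submodule.finrank_map_subtype_eq,
    finrank_bot, add_zero] at hRplus_dim
  rw [hsup, hdisj, finrank_bot, add_zero] at hW_dim
  omega

/-- part of Proposition 5: for a topological bibrane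
`(W,F)` in a space of signature `(n,n)`, the subspace `R₊` has dimension `n`. -/
theorem stmt8 {V : Type*} [AddCommGroup V] [Module ℝ V] [FiniteDimensional ℝ V]
    (n k : ℕ) (hdim : finrank ℝ V = 2 * n)
    (G : LinearMap.BilinForm ℝ V) (hGnd : G.Nondegenerate) (hGsymm : G.IsSymm)
    (hsig : ∃ P N : Submodule ℝ V, IsCompl P N ∧
      finrank ℝ P = n ∧ finrank ℝ N = n ∧
      (∀ x ∈ P, x ≠ 0 → 0 < G x x) ∧ (∀ x ∈ N, x ≠ 0 → G x x < 0))
    (W : Submodule ℝ V) (hco : orthSub G W ≤ W) (hk : finrank ℝ W = k)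
    (F : LinearMap.BilinForm ℝ W) (hFalt : F.IsAlt)
    (hker : ∀ u : W, (∀ w : W, F u w = 0) ↔ (u : V) ∈ orthSub G W)
    (S : Submodule ℝ V) (hSle : S ≤ W)
    (hdisj : S ⊓ orthSub G W = ⊥) (hsup : S ⊔ orthSub G W = W)
    (R : S →ₗ[ℝ] S)
    (hR : ∀ x y : S, F ⟨(x : V), hSle x.2⟩ ⟨(y : V), hSle y.2⟩ = G ((R x : S) : V) (y : V))
    (hR2 : ∀ x : S, R (R x) = x) :
    finrank ℝ (Rplus G W F) = n :=
  stmt8_general n hdim G hGnd hGsymm W F hFalt hker S hSle hdisj hsup R hR hR2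
end
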